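/- arXiv:2007.13050 — 2 statements merged into one kernel-verified Lean document; each statement's English description precedes it below -/
import Mathlib

section
/- Let P be an N×N column-stochastic matrix, x : Fin N → ℝ^d, and y : Fin N → ℝ with y(i) > 0 for all i. Define x'(j) = Σ_i p_{ji} x(i), y'(j) = Σ_i p_{ji} y(i), and ratio states r(i) = x(i)/y(i), r'(i) = x'(i)/y'(i). Then the convex hull of {r'(i)} is contained in the convex hull of {r(i)}. -/
/-!
Each new ratio state is a centre of mass of the old ones: with weights `P j i * y i`,
`x' j / y' j = (∑ i, P j i * y i)⁻¹ • ∑ i, (P j i * y i) • (x i / y i)`.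
The weights are nonnegative with positive sum, so this point lies in the convex hull of the
`x i / y i`, and hence so does the convex hull of all the new ratio states.
-/

open Finset

section

variable {R E ι : Type*} [Field R] [AddCommGroup E] [Module R E]

theorem Finset.centerMass_mul_inv_smul (t : Finset ι) (w y : ι → R) (x : ι → E)
    (hy : ∀ i ∈ t, y i ≠ 0) :
    t.centerMass (fun i => w i * y i) (fun i => (y i)⁻¹ • x i) =
      (∑ i ∈ t, w i * y i)⁻¹ • ∑ i ∈ t, w i • x i := by
  rw [centerMass]
  congr 1
  refine sum_congr rfl fun i hi => ?_
  rw [smul_smul, mul_assoc, mul_inv_cancel₀ (hy i hi), mul_one]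

variable [LinearOrder R] [IsStrictOrderedRing R] [Fintype ι]

theorem inv_sum_mul_smul_sum_mem_convexHull (w y : ι → R) (x : ι → E)
    (hw : ∀ i, 0 ≤ w i) (hwpos : ∃ i, 0 < w i) (hy : ∀ i, 0 < y i) :
    (∑ i, w i * y i)⁻¹ • ∑ i, w i • x i ∈
      convexHull R (Set.range fun i => (y i)⁻¹ • x i) := by
  rw [← centerMass_mul_inv_smul _ _ _ _ fun i _ => (hy i).ne']
  obtain ⟨i₀, hi₀⟩ := hwpos
  refine univ.centerMass_mem_convexHull (fun i _ => mul_nonneg (hw i) (hy i).le) ?_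
    fun i _ => Set.mem_range_self i
  exact sum_pos' (fun i _ => mul_nonneg (hw i) (hy i).le)
    ⟨i₀, mem_univ i₀, mul_pos hi₀ (hy i₀)⟩

end

theorem stmt_10_general {N d : ℕ} (P : Matrix (Fin N) (Fin N) ℝ)
    (hnonneg : ∀ j i, 0 ≤ P j i)
    (hrowpos : ∀ j, ∃ i, 0 < P j i)
    (x : Fin N → EuclideanSpace ℝ (Fin d)) (y : Fin N → ℝ)
    (hy : ∀ i, 0 < y i) :
    convexHull ℝ
        (Set.range fun j => (∑ i, P j i * y i)⁻¹ • ∑ i, P j i • x i) ⊆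
      convexHull ℝ (Set.range fun i => (y i)⁻¹ • x i) := by
  refine convexHull_min ?_ (convex_convexHull ℝ _)
  rintro _ ⟨j, rfl⟩
  exact inv_sum_mul_smul_sum_mem_convexHull (P j) y x (hnonneg j) (hrowpos j) hy

theorem stmt_10 {N d : ℕ} (P : Matrix (Fin N) (Fin N) ℝ)
    (hnonneg : ∀ j i, 0 ≤ P j i) (hcol : ∀ i, ∑ j, P j i = 1)
    (hrowpos : ∀ j, ∃ i, 0 < P j i)
    (x : Fin N → EuclideanSpace ℝ (Fin d)) (y : Fin N → ℝ)
    (hy : ∀ i, 0 < y i) :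
    convexHull ℝ
        (Set.range fun j => (∑ i, P j i * y i)⁻¹ • ∑ i, P j i • x i) ⊆
      convexHull ℝ (Set.range fun i => (y i)⁻¹ • x i) :=
  stmt_10_general P hnonneg hrowpos x y hy
end

section
/- Let G be a strongly connected directed graph with vertex set V and diameter at most D, where each node i holds a finite set S_i ⊆ ℝ^d. Define x_i(0) = 𝓔(S_i) and x_i(t) = 𝓔(⋃_{j ∈ N⁻_i(1)} x_j(t−1)), where 𝓔(U) denotes the set of extreme points of co(U). Then for all t ≥ 0, x_i(t) = 𝓔(⋃_{j ∈ N⁻_i(t)} S_j), and in particular x_i(t) = 𝓔(⋃_{j ∈ V} S_j) for all t ≥ D and all i. -/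
/-!
For a finite set `U`, Krein–Milman gives `co (𝓔 U) = co U`. Hence replacing the sets of a union by
their extreme points changes neither the convex hull of the union nor its extreme points. Applied
to the finite sets `⋃_{k ∈ N⁻ⱼ(t)} S k`, together with `N⁻ᵢ(t + 1) = ⋃_{j ∈ N⁻ᵢ(1)} N⁻ⱼ(t)`, this
turns the recursion for `xᵢ(t)` into the closed form by induction on `t`; for `t ≥ D` the
neighbourhood `N⁻ᵢ(t)` is all of `V`.
-/

/-- One-step in-neighborhood of `i` (including `i` itself). -/
def inNbhd {V : Type*} (adj : V → V → Prop) (i : V) : Set V :=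
  {j | adj i j} ∪ {i}

/-- `m`-step in-neighborhood: nodes from which `i` can be reached in at most `m` steps. -/
def inNbhdIter {V : Type*} (adj : V → V → Prop) (i : V) : ℕ → Set V
  | 0 => {i}
  | m + 1 => ⋃ j ∈ inNbhdIter adj i m, inNbhd adj j

/-- The extreme points of the convex hull of a set. -/
def extPts {d : ℕ} (U : Set (EuclideanSpace ℝ (Fin d))) : Set (EuclideanSpace ℝ (Fin d)) :=
  Set.extremePoints ℝ (convexHull ℝ U)

open Set

section ConvexHull

theorem convexHull_biUnion_subset_of_subset {𝕜 E ι : Type*} [Field 𝕜] [LinearOrder 𝕜]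
    [IsStrictOrderedRing 𝕜] [AddCommGroup E] [Module 𝕜 E] {I : Set ι} {A B : ι → Set E}
    (h : ∀ j ∈ I, B j ⊆ convexHull 𝕜 (A j)) :
    convexHull 𝕜 (⋃ j ∈ I, B j) ⊆ convexHull 𝕜 (⋃ j ∈ I, A j) :=
  convexHull_min (iUnion₂_subset fun j hj =>
      (h j hj).trans (convexHull_mono (subset_biUnion_of_mem hj)))
    (convex_convexHull 𝕜 _)

theorem convexHull_biUnion_congr {𝕜 E ι : Type*} [Field 𝕜] [LinearOrder 𝕜]
    [IsStrictOrderedRing 𝕜] [AddCommGroup E] [Module 𝕜 E] {I : Set ι} {A B : ι → Set E}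
    (h : ∀ j ∈ I, convexHull 𝕜 (B j) = convexHull 𝕜 (A j)) :
    convexHull 𝕜 (⋃ j ∈ I, B j) = convexHull 𝕜 (⋃ j ∈ I, A j) :=
  (convexHull_biUnion_subset_of_subset fun j hj => h j hj ▸ subset_convexHull 𝕜 (B j)).antisymm
    (convexHull_biUnion_subset_of_subset fun j hj => h j hj ▸ subset_convexHull 𝕜 (A j))

theorem Set.Finite.convexHull_extremePoints_convexHull {E : Type*} [AddCommGroup E] [Module ℝ E]
    [TopologicalSpace E] [T2Space E] [IsTopologicalAddGroup E] [ContinuousSMul ℝ E]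
    [LocallyConvexSpace ℝ E] {U : Set E} (hU : U.Finite) :
    convexHull ℝ ((convexHull ℝ U).extremePoints ℝ) = convexHull ℝ U := by
  have hclosed : IsClosed (convexHull ℝ ((convexHull ℝ U).extremePoints ℝ)) :=
    ((hU.subset extremePoints_convexHull_subset).isCompact_convexHull ℝ).isClosed
  rw [← hclosed.closure_eq]
  exact closure_convexHull_extremePoints (hU.isCompact_convexHull ℝ) (convex_convexHull ℝ U)

end ConvexHull

theorem extPts_biUnion_extPts {ι : Type*} {d : ℕ} {I : Set ι}
    {A : ι → Set (EuclideanSpace ℝ (Fin d))} (hA : ∀ j ∈ I, (A j).Finite) :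
    extPts (⋃ j ∈ I, extPts (A j)) = extPts (⋃ j ∈ I, A j) :=
  congrArg (extremePoints ℝ)
    (convexHull_biUnion_congr fun j hj => (hA j hj).convexHull_extremePoints_convexHull)

section InNbhd

variable {V : Type*} (adj : V → V → Prop)

theorem mem_inNbhd_self (j : V) : j ∈ inNbhd adj j :=
  Or.inr rfl

theorem inNbhdIter_succ_eq_biUnion (i : V) (t : ℕ) :
    inNbhdIter adj i (t + 1) = ⋃ j ∈ inNbhd adj i, inNbhdIter adj j t := by
  induction t generalizing i with
  | zero => simp [inNbhdIter]
  | succ t ih =>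
    change ⋃ j ∈ inNbhdIter adj i (t + 1), inNbhd adj j = _
    rw [ih]
    simp only [biUnion_iUnion]
    rfl

theorem inNbhdIter_mono (i : V) : Monotone (inNbhdIter adj i) :=
  monotone_nat_of_le_succ fun _ k hk => mem_biUnion hk (mem_inNbhd_self adj k)

theorem inNbhdIter_eq_univ {D : ℕ} (hD : ∀ i j, j ∈ inNbhdIter adj i D) {i : V} {t : ℕ}
    (ht : D ≤ t) : inNbhdIter adj i t = univ :=
  eq_univ_of_forall fun j => inNbhdIter_mono adj i ht (hD i j)

end InNbhd

theorem stmt_15 {V : Type*} [Fintype V] {d : ℕ} (adj : V → V → Prop)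
    (S : V → Set (EuclideanSpace ℝ (Fin d))) (hS : ∀ i, (S i).Finite)
    (D : ℕ) (hD : ∀ i j, j ∈ inNbhdIter adj i D)
    (x : V → ℕ → Set (EuclideanSpace ℝ (Fin d)))
    (hx0 : ∀ i, x i 0 = extPts (S i))
    (hxs : ∀ i t, x i (t + 1) = extPts (⋃ j ∈ inNbhd adj i, x j t)) :
    (∀ i t, x i t = extPts (⋃ j ∈ inNbhdIter adj i t, S j)) ∧
      ∀ i t, D ≤ t → x i t = extPts (⋃ j, S j) := by
  have closed_form : ∀ t i, x i t = extPts (⋃ j ∈ inNbhdIter adj i t, S j) := by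
    intro t
    induction t with
    | zero => simp [hx0, inNbhdIter]
    | succ t ih =>
      intro i
      have hfin : ∀ j ∈ inNbhd adj i, (⋃ k ∈ inNbhdIter adj j t, S k).Finite :=
        fun j _ => (toFinite _).biUnion fun k _ => hS k
      rw [hxs, inNbhdIter_succ_eq_biUnion]
      simp only [ih, biUnion_iUnion]
      exact extPts_biUnion_extPts hfin
  refine ⟨fun i t => closed_form t i, fun i t ht => ?_⟩
  rw [closed_form, inNbhdIter_eq_univ adj hD ht, biUnion_univ]
end
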